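/- Let G be an additive abelian group and A an m×n partial matrix over G. If every minimal cycle in A is balanced, then every cycle in A is balanced; hence A is cycle-balanced if and only if every minimal cycle in A is balanced. -/

import Mathlib

/-- `(i, j)` describes a cycle in the partial matrix `A`: writing the index sequence
`(i 0, j 0, i 1, j 1, …, i k, j k, i 0)` (addition of indices is modulo `k + 1`),
the corresponding closed walk in the bipartite graph `H_A` uses only edges of `H_A`
and does not repeat edges. -/
def IsCycleIn {G : Type*} {m n : ℕ} (A : Matrix (Fin m) (Fin n) (Option G))
    {k : ℕ} (i : Fin (k + 1) → Fin m) (j : Fin (k + 1) → Fin n) : Prop :=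
  (∀ r, A (i r) (j r) ≠ none) ∧
  (∀ r, A (i (r + 1)) (j r) ≠ none) ∧
  Function.Injective (fun p : Fin (k + 1) × Bool =>
    if p.2 then (i p.1, j p.1) else (i (p.1 + 1), j p.1))

/-- The cycle `(i, j)` in `A` is balanced: `Σ_r (a_{i_r, j_r} − a_{i_{r+1}, j_r}) = 0`. -/
def IsBalancedCycle {G : Type*} [AddCommGroup G] {m n : ℕ}
    (A : Matrix (Fin m) (Fin n) (Option G))
    {k : ℕ} (i : Fin (k + 1) → Fin m) (j : Fin (k + 1) → Fin n) : Prop :=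
  ∑ r : Fin (k + 1), ((A (i r) (j r)).getD 0 - (A (i (r + 1)) (j r)).getD 0) = 0

/-- A partial matrix is cycle-balanced if every cycle in it is balanced. -/
def CycleBalanced {G : Type*} [AddCommGroup G] {m n : ℕ}
    (A : Matrix (Fin m) (Fin n) (Option G)) : Prop :=
  ∀ (k : ℕ) (i : Fin (k + 1) → Fin m) (j : Fin (k + 1) → Fin n),
    IsCycleIn A i j → IsBalancedCycle A i j

/-- A cycle in `A` is minimal if the subgraph of `H_A` induced by its vertices contains
no cycle on fewer vertices. -/
def IsMinimalCycleIn {G : Type*} {m n : ℕ} (A : Matrix (Fin m) (Fin n) (Option G))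
    {k : ℕ} (i : Fin (k + 1) → Fin m) (j : Fin (k + 1) → Fin n) : Prop :=
  IsCycleIn A i j ∧
  ¬ ∃ (k' : ℕ) (i' : Fin (k' + 1) → Fin m) (j' : Fin (k' + 1) → Fin n),
      IsCycleIn A i' j' ∧ (∀ r, i' r ∈ Set.range i) ∧ (∀ r, j' r ∈ Set.range j) ∧
      (Finset.image i' Finset.univ).card + (Finset.image j' Finset.univ).card <
        (Finset.image i Finset.univ).card + (Finset.image j Finset.univ).card

/-!
A closed walk with a chord splits along it into two shorter closed walks whose sums add up to
the sum of the walk, so by induction on the length every closed walk is balanced once every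
chordless cycle is. A closed walk of length at least three that repeats a row or a column has a
chord, and a chordless cycle is minimal, because a cycle on its vertices can only run around it.
-/

open Fin.NatCast Finset Function

namespace Fin

variable {k : ℕ}

theorem forall_of_add_one {P : Fin (k + 1) → Prop} (h₀ : P 0) (h : ∀ r, P r → P (r + 1))
    (r : Fin (k + 1)) : P r :=
  Fin.induction h₀ (fun _ hr => Fin.coeSucc_eq_succ ▸ h _ hr) r

theorem surjective_of_add_one {k' : ℕ} {u : Fin (k' + 1) → Fin (k + 1)}
    (hu : ∀ r, u (r + 1) = u r + 1) : Surjective u := by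
  have h : ∀ x, u 0 + x ∈ Set.range u :=
    forall_of_add_one ⟨0, (add_zero _).symm⟩ fun x ⟨r, hr⟩ => ⟨r + 1, by rw [hu, hr, add_assoc]⟩
  intro a
  simpa using h (a - u 0)

theorem surjective_of_sub_one {k' : ℕ} {u : Fin (k' + 1) → Fin (k + 1)}
    (hu : ∀ r, u (r + 1) = u r - 1) : Surjective u := by
  have := surjective_of_add_one (u := fun r => -u r) fun r => by rw [hu, neg_sub', sub_neg_eq_add]
  intro a
  obtain ⟨r, hr⟩ := this (-a)
  exact ⟨r, neg_injective hr⟩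

/-- Positions `f r` (rows) and `g r` (columns) of a closed walk that only moves along the
cycle `0, 0, 1, 1, …, k, k` and never turns back must run around the whole cycle. -/
theorem surjective_of_adjacent {k' : ℕ} {f g : Fin (k' + 1) → Fin (k + 1)}
    (h₁ : ∀ r, g r = f r ∨ f r = g r + 1) (h₂ : ∀ r, g r = f (r + 1) ∨ f (r + 1) = g r + 1)
    (hf : ∀ r, f (r + 1) ≠ f r) (hg : ∀ r, g (r + 1) ≠ g r) :
    Surjective f ∧ Surjective g := by
  rcases h₁ 0 with h₀ | h₀
  · have hgf : ∀ r, g r = f r := by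
      refine forall_of_add_one h₀ fun r hr => ?_
      have hr' : f (r + 1) = g r + 1 := (h₂ r).resolve_left fun h => hf r (by rw [← h, hr])
      exact (h₁ (r + 1)).resolve_right fun h => hg r (add_right_cancel (b := 1) (by rw [← h, hr']))
    have hstep : ∀ r, f (r + 1) = f r + 1 := fun r =>
      ((h₂ r).resolve_left fun h => hf r (by rw [← h, hgf])).trans (by rw [hgf])
    exact ⟨surjective_of_add_one hstep, (funext hgf ▸ surjective_of_add_one hstep :)⟩
  · have hfg : ∀ r, f r = g r + 1 := by
      refine forall_of_add_one h₀ fun r hr => ?_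
      have hr' : g r = f (r + 1) := (h₂ r).resolve_right fun h => hf r (by rw [h, hr])
      exact (h₁ (r + 1)).resolve_left fun h => hg r (by rw [h, hr'])
    have hgf : ∀ r, g r = f (r + 1) := fun r =>
      (h₂ r).resolve_right fun h => hf r (by rw [h, hfg])
    have hstep : ∀ r, f (r + 1) = f r - 1 := fun r => by rw [← hgf, hfg, add_sub_cancel_right]
    have hf' := surjective_of_sub_one hstep
    refine ⟨hf', fun a => ?_⟩
    obtain ⟨r, hr⟩ := hf' a
    exact ⟨r - 1, by rw [hgf, sub_add_cancel, hr]⟩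

theorem apply_val_add_one {α : Type*} {I : ℕ → α} {d : ℕ} (hI : I (d + 1) = I 0)
    (r : Fin (d + 1)) : I ↑(r + 1) = I (↑r + 1) := by
  rw [Fin.val_add_one]
  split_ifs with hr
  · rw [hr, Fin.val_last, hI]
  · rfl

end Fin

namespace PartialMatrix

variable {G : Type*} {m n k : ℕ}

def IsClosedWalk (A : Matrix (Fin m) (Fin n) (Option G)) (i : Fin (k + 1) → Fin m)
    (j : Fin (k + 1) → Fin n) : Prop :=
  (∀ r, A (i r) (j r) ≠ none) ∧ ∀ r, A (i (r + 1)) (j r) ≠ none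

/-- An entry of `A` joining the row at position `a` of the walk to its column at position `b`
that is not one of the walk's own steps. -/
def IsChord (A : Matrix (Fin m) (Fin n) (Option G)) (i : Fin (k + 1) → Fin m)
    (j : Fin (k + 1) → Fin n) (a b : Fin (k + 1)) : Prop :=
  A (i a) (j b) ≠ none ∧ b ≠ a ∧ a ≠ b + 1

variable {A : Matrix (Fin m) (Fin n) (Option G)} {i : Fin (k + 1) → Fin m}
  {j : Fin (k + 1) → Fin n} {I : ℕ → Fin m} {J : ℕ → Fin n} {d : ℕ}

theorem _root_.IsCycleIn.isClosedWalk (h : IsCycleIn A i j) : IsClosedWalk A i j := ⟨h.1, h.2.1⟩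

theorem IsClosedWalk.isCycleIn (h : IsClosedWalk A i j) (hk : k ≠ 0) (hi : Injective i)
    (hj : Injective j) : IsCycleIn A i j := by
  have hne : ∀ r : Fin (k + 1), i r ≠ i (r + 1) := fun r hr => by
    simpa [Fin.one_eq_zero_iff, hk] using hi hr
  refine ⟨h.1, h.2, ?_⟩
  rintro ⟨r, _ | _⟩ ⟨s, _ | _⟩ hrs <;> simp only [Prod.mk.injEq, Bool.false_eq_true,
    if_true, if_false] at hrs <;> obtain rfl := hj hrs.2
  · rfl
  · exact absurd hrs.1.symm (hne r)
  · exact absurd hrs.1 (hne r)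
  · rfl

/-- Any cycle on the vertices of a chordless cycle runs around all of it. -/
theorem _root_.IsCycleIn.isMinimalCycleIn (hC : IsCycleIn A i j)
    (h : ∀ a b, ¬ IsChord A i j a b) : IsMinimalCycleIn A i j := by
  have adj : ∀ a b, A (i a) (j b) ≠ none → b = a ∨ a = b + 1 := fun a b hab =>
    by_contra fun hc => h a b ⟨hab, not_or.1 hc⟩
  refine ⟨hC, fun ⟨k', i', j', hC', hi', hj', hlt⟩ => ?_⟩
  choose f hf using hi'
  choose g hg using hj'
  have hedge := hC'.2.2
  obtain ⟨hfs, hgs⟩ := Fin.surjective_of_adjacent (f := f) (g := g)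
    (fun r => adj _ _ (by rw [hf, hg]; exact hC'.1 r))
    (fun r => adj _ _ (by rw [hf, hg]; exact hC'.2.1 r))
    (fun r hr => by simpa using @hedge (r, false) (r, true) (by simp [← hf, hr]))
    (fun r hr => by simpa using @hedge (r, false) (r + 1, true) (by simp [← hg, hr]))
  refine hlt.not_ge (add_le_add (card_le_card ?_) (card_le_card ?_))
  · intro _ hx
    obtain ⟨a, -, rfl⟩ := mem_image.1 hx
    obtain ⟨r, rfl⟩ := hfs a
    exact mem_image.2 ⟨r, mem_univ _, (hf r).symm⟩
  · intro _ hx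
    obtain ⟨b, -, rfl⟩ := mem_image.1 hx
    obtain ⟨r, rfl⟩ := hgs b
    exact mem_image.2 ⟨r, mem_univ _, (hg r).symm⟩

theorem IsClosedWalk.rotate (h : IsClosedWalk A i j) (s : Fin (k + 1)) :
    IsClosedWalk A (fun r => i (r + s)) (fun r => j (r + s)) :=
  ⟨fun r => h.1 _, fun r => by simpa only [add_right_comm r 1 s] using h.2 (r + s)⟩

theorem isClosedWalk_comp_val (hI : I (d + 1) = I 0) (h₁ : ∀ t ≤ d, A (I t) (J t) ≠ none)
    (h₂ : ∀ t ≤ d, A (I (t + 1)) (J t) ≠ none) :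
    IsClosedWalk A (fun r : Fin (d + 1) => I r) (fun r => J r) :=
  ⟨fun r => h₁ r (Fin.is_le r), fun r => by
    simpa only [Fin.apply_val_add_one hI r] using h₂ r (Fin.is_le r)⟩

theorem IsClosedWalk.exists_isChord (hw : IsClosedWalk A i j) (hk : 2 ≤ k)
    (h : ¬ (Injective i ∧ Injective j)) : ∃ a b, IsChord A i j a b := by
  obtain ⟨a, b, hne, hab⟩ : ∃ a b, a ≠ b ∧ (i a = i b ∨ j a = j b) := by
    simp only [not_and_or, not_injective_iff] at h
    rcases h with ⟨a, b, h, hne⟩ | ⟨a, b, h, hne⟩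
    exacts [⟨a, b, hne, .inl h⟩, ⟨a, b, hne, .inr h⟩]
  have hE : A (i a) (j b) ≠ none ∧ A (i b) (j a) ≠ none := by
    rcases hab with h | h
    · exact ⟨h ▸ hw.1 b, h ▸ hw.1 a⟩
    · exact ⟨h ▸ hw.1 a, h ▸ hw.1 b⟩
  by_cases hab₁ : a = b + 1
  · refine ⟨b, a, hE.2, hne, fun hba => ?_⟩
    rw [hab₁, add_assoc, left_eq_add, Fin.ext_iff, Fin.val_add, Fin.val_one', Fin.val_zero,
      Nat.mod_eq_of_lt (a := 1) (by omega), Nat.mod_eq_of_lt (by omega)] at hba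
    exact two_ne_zero hba
  · exact ⟨a, b, hE.1, hne.symm, hab₁⟩

variable [AddCommGroup G]

variable (A) in
/-- `IsBalancedCycle A i j` says `walkSum A i j = 0`. -/
def walkSum (i : Fin (k + 1) → Fin m) (j : Fin (k + 1) → Fin n) : G :=
  ∑ r, ((A (i r) (j r)).getD 0 - (A (i (r + 1)) (j r)).getD 0)

theorem walkSum_rotate (s : Fin (k + 1)) :
    walkSum A (fun r => i (r + s)) (fun r => j (r + s)) = walkSum A i j :=
  Fintype.sum_equiv (Equiv.addRight s) _ _ fun r => by simp [add_right_comm r 1 s]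

theorem walkSum_comp_val (hI : I (d + 1) = I 0) :
    walkSum A (fun r : Fin (d + 1) => I r) (fun r => J r) =
      ∑ t ∈ range (d + 1), ((A (I t) (J t)).getD 0 - (A (I (t + 1)) (J t)).getD 0) := by
  rw [walkSum, ← Fin.sum_univ_eq_sum_range]
  simp only [Fin.apply_val_add_one hI]

theorem exists_split_of_chord_at_zero (hI : I (k + 1) = I 0) (hE₁ : ∀ t ≤ k, A (I t) (J t) ≠ none)
    (hE₂ : ∀ t ≤ k, A (I (t + 1)) (J t) ≠ none) {D : ℕ} (hD : 0 < D) (hDk : D < k)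
    (hc : A (I 0) (J D) ≠ none) :
    ∃ (i₁ : Fin (D + 1) → Fin m) (j₁ : Fin (D + 1) → Fin n)
      (i₂ : Fin (k - D + 1) → Fin m) (j₂ : Fin (k - D + 1) → Fin n),
      IsClosedWalk A i₁ j₁ ∧ IsClosedWalk A i₂ j₂ ∧
        walkSum A (fun r : Fin (k + 1) => I r) (fun r => J r) =
          walkSum A i₁ j₁ + walkSum A i₂ j₂ := by
  -- The chord `(I 0, J D)` closes off the first `D + 1` steps, and replaces them in the rest.
  set I₁ : ℕ → Fin m := fun t => if t ≤ D then I t else I 0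
  set I₂ : ℕ → Fin m := fun t => if t = 0 then I 0 else I (D + t)
  set J₂ : ℕ → Fin n := fun t => J (D + t)
  have hI₁ : I₁ (D + 1) = I₁ 0 := by simp [I₁]
  have hI₂ : I₂ (k - D + 1) = I₂ 0 := by
    simp only [I₂, Nat.add_eq_zero_iff, one_ne_zero, and_false, if_false, if_true]
    rw [← hI]; congr 1; omega
  refine ⟨fun r => I₁ r, fun r => J r, fun r => I₂ r, fun r => J₂ r, ?_, ?_, ?_⟩
  · refine isClosedWalk_comp_val hI₁ (fun t ht => by simpa [I₁, ht] using hE₁ t (by omega))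
      fun t ht => ?_
    rcases ht.lt_or_eq with ht | rfl
    · simpa [I₁, Nat.add_one_le_iff.2 ht] using hE₂ t (by omega)
    · simpa [I₁] using hc
  · refine isClosedWalk_comp_val hI₂ (fun t ht => ?_) fun t ht => ?_
    · rcases t with _ | t
      · simpa [I₂, J₂] using hc
      · simpa [I₂, J₂] using hE₁ (D + (t + 1)) (by omega)
    · simpa [I₂, J₂, add_assoc] using hE₂ (D + t) (by omega)
  · set φ : Fin m → Fin n → G := fun x y => (A x y).getD 0
    set f : ℕ → G := fun t => φ (I t) (J t) - φ (I (t + 1)) (J t)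
    have h₁ : ∑ t ∈ range (D + 1), (φ (I₁ t) (J t) - φ (I₁ (t + 1)) (J t)) =
        ∑ t ∈ range D, f t + (φ (I D) (J D) - φ (I 0) (J D)) := by
      rw [sum_range_succ]
      congr 1
      · exact sum_congr rfl fun t ht => by
          simp [I₁, f, (mem_range.1 ht).le, Nat.add_one_le_iff.2 (mem_range.1 ht)]
      · simp [I₁]
    have h₂ : ∑ t ∈ range (k - D + 1), (φ (I₂ t) (J₂ t) - φ (I₂ (t + 1)) (J₂ t)) =
        ∑ t ∈ range (k - D), f (D + (t + 1)) + (φ (I 0) (J D) - φ (I (D + 1)) (J D)) := by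
      rw [sum_range_succ']
      congr 1
    have hsplit : ∑ t ∈ range (k + 1), f t =
        ∑ t ∈ range D, f t + (∑ t ∈ range (k - D), f (D + (t + 1)) + f (D + 0)) := by
      rw [← sum_range_succ' (fun t => f (D + t)), ← sum_range_add,
        show D + (k - D + 1) = k + 1 by omega]
    rw [walkSum_comp_val hI, walkSum_comp_val hI₁, walkSum_comp_val hI₂]
    change ∑ t ∈ range (k + 1), f t = _
    rw [h₁, h₂, hsplit]
    simp only [f, add_zero]
    abel

theorem IsClosedWalk.exists_split_of_isChord (hw : IsClosedWalk A i j) {a b : Fin (k + 1)}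
    (hc : IsChord A i j a b) :
    ∃ k₁ k₂, k₁ < k ∧ k₂ < k ∧ ∃ (i₁ : Fin (k₁ + 1) → Fin m) (j₁ : Fin (k₁ + 1) → Fin n)
      (i₂ : Fin (k₂ + 1) → Fin m) (j₂ : Fin (k₂ + 1) → Fin n),
      IsClosedWalk A i₁ j₁ ∧ IsClosedWalk A i₂ j₂ ∧
        walkSum A i j = walkSum A i₁ j₁ + walkSum A i₂ j₂ := by
  obtain ⟨hab, hba, hab₁⟩ := hc
  have hD : 0 < (b - a).val :=
    Nat.pos_of_ne_zero fun h => hba (sub_eq_zero.1 (Fin.ext h))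
  have hDk : (b - a).val < k := by
    refine lt_of_le_of_ne (Fin.is_le _) fun h => hab₁ ?_
    rw [← sub_add_cancel b a, show b - a = Fin.last k from Fin.ext h, add_right_comm,
      Fin.last_add_one, zero_add]
  have hw' := hw.rotate a
  obtain ⟨i₁, j₁, i₂, j₂, h₁, h₂, hsum⟩ := exists_split_of_chord_at_zero (A := A)
    (I := fun t => i (t + a)) (J := fun t => j (t + a)) (by simp) (fun t _ => hw'.1 t)
    (fun t _ => by simpa using hw'.2 t) hD hDk (by simpa using hab)
  refine ⟨_, _, hDk, by omega, i₁, j₁, i₂, j₂, h₁, h₂, ?_⟩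
  rw [← hsum, ← walkSum_rotate a]
  simp

theorem walkSum_eq_zero_of_not_injective_fin_two {i : Fin (1 + 1) → Fin m}
    {j : Fin (1 + 1) → Fin n} (h : ¬ (Injective i ∧ Injective j)) : walkSum A i j = 0 := by
  have h01 : i 0 = i 1 ∨ j 0 = j 1 := by
    by_contra! hne
    refine h ⟨fun x y hxy => ?_, fun x y hxy => ?_⟩ <;>
      fin_cases x <;> fin_cases y <;> simp_all [eq_comm]
  rcases h01 with h01 | h01
  · simp [walkSum, Fin.sum_univ_two, h01]
  · simp [walkSum, Fin.sum_univ_two, h01]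
    abel

theorem IsClosedWalk.walkSum_eq_zero
    (H : ∀ (k : ℕ) (i : Fin (k + 1) → Fin m) (j : Fin (k + 1) → Fin n),
      IsMinimalCycleIn A i j → IsBalancedCycle A i j)
    (hw : IsClosedWalk A i j) : walkSum A i j = 0 := by
  induction k using Nat.strong_induction_on with
  | _ k ih =>
  obtain rfl | hk := Nat.eq_zero_or_pos k
  · simp [walkSum]
  by_cases hchord : ∃ a b, IsChord A i j a b
  · obtain ⟨a, b, hc⟩ := hchord
    obtain ⟨k₁, k₂, hk₁, hk₂, i₁, j₁, i₂, j₂, h₁, h₂, hsum⟩ := hw.exists_split_of_isChord hc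
    rw [hsum, ih k₁ hk₁ h₁, ih k₂ hk₂ h₂, add_zero]
  by_cases hinj : Injective i ∧ Injective j
  · exact H k i j <| (hw.isCycleIn hk.ne' hinj.1 hinj.2).isMinimalCycleIn fun a b hc =>
      hchord ⟨a, b, hc⟩
  obtain rfl | hk₂ : k = 1 ∨ 2 ≤ k := by omega
  · exact walkSum_eq_zero_of_not_injective_fin_two hinj
  · exact absurd (hw.exists_isChord hk₂ hinj) hchord

theorem cycleBalanced_of_forall_isMinimalCycleIn
    (H : ∀ (k : ℕ) (i : Fin (k + 1) → Fin m) (j : Fin (k + 1) → Fin n),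
      IsMinimalCycleIn A i j → IsBalancedCycle A i j) :
    CycleBalanced A := fun _ _ _ hC => hC.isClosedWalk.walkSum_eq_zero H

end PartialMatrix

theorem stmt11 {G : Type*} [AddCommGroup G] {m n : ℕ}
    (A : Matrix (Fin m) (Fin n) (Option G)) :
    ((∀ (k : ℕ) (i : Fin (k + 1) → Fin m) (j : Fin (k + 1) → Fin n),
        IsMinimalCycleIn A i j → IsBalancedCycle A i j) → CycleBalanced A) ∧
      (CycleBalanced A ↔
        ∀ (k : ℕ) (i : Fin (k + 1) → Fin m) (j : Fin (k + 1) → Fin n),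
          IsMinimalCycleIn A i j → IsBalancedCycle A i j) :=
  ⟨PartialMatrix.cycleBalanced_of_forall_isMinimalCycleIn,
    fun h _ _ _ hmin => h _ _ _ hmin.1,
    PartialMatrix.cycleBalanced_of_forall_isMinimalCycleIn⟩
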